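/- Let α be a permutation with a cycle (i₁ ⋯ i_a) of length a, and let τ act on ordered pairs by τ(x,y) = (y^α, x^α). Then the a² pairs with both coordinates in {i₁,…,i_a} decompose under τ into orbits with cycle-structure monomial: x_a · x_{2a}^{(a−1)/2} if a is odd; x_a^a if a ≡ 0 mod 4; x_{a/2}² · x_a^{a−1} if a ≡ 2 mod 4. -/

import Mathlib

/-!
Parametrise the cycle of `α` by `ZMod a`, so that `α` acts as `k ↦ k + 1` and `τ` as
`(i, j) ↦ (j + 1, i + 1)`. Even powers of `τ` translate along the diagonal and odd powers also
swap, so `(i, j)` is fixed by `τ ^ n` for even `n` iff `a ∣ n`, and for odd `n` iff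
`n ≡ i - j` and `2 n ≡ 0 (mod a)`. For odd `a` the latter happens only when `i = j`; for even `a`
it forces `n ≡ a / 2`, possible for odd `n` only when `a / 2` is odd, and then `i - j = a / 2`.
So the orbit length of `(i, j)` depends only on `i - j`; each difference class has `a` pairs,
and counting points by orbit length counts the orbits.
-/

open Function Set

theorem Set.ncard_sUnion_of_forall_ncard_eq {β : Type*} [Finite β] {C : Set (Set β)} {s : ℕ}
    (hC : C.PairwiseDisjoint id) (hs : ∀ O ∈ C, O.ncard = s) : (⋃₀ C).ncard = C.ncard * s := by
  rw [sUnion_eq_biUnion, show (⋃ i ∈ C, i) = ⋃ i ∈ C, id i from rfl,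
    (toFinite C).ncard_biUnion (fun _ _ => toFinite _) hC,
    finsum_mem_congr rfl fun O hO => (hs O hO : (id O).ncard = s),
    finsum_mem_eq_finite_toFinset_sum _ (toFinite C), Finset.sum_const, smul_eq_mul,
    ncard_eq_toFinset_card _ (toFinite C)]

theorem Function.Semiconj.minimalPeriod_apply {α β : Type*} {g : α → β} {fa : α → α} {fb : β → β}
    (h : Semiconj g fa fb) (hg : Injective g) (x : α) :
    minimalPeriod fb (g x) = minimalPeriod fa x :=
  minimalPeriod_eq_minimalPeriod_iff.2 fun n => by
    simp only [IsPeriodicPt, IsFixedPt, ← h.iterate_right n x, hg.eq_iff]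

theorem Function.minimalPeriod_eq_of_isPeriodicPt_iff {α : Type*} {f : α → α} {x : α} {m : ℕ}
    (h : ∀ n, IsPeriodicPt f n x ↔ m ∣ n) : minimalPeriod f x = m :=
  Nat.dvd_right_iff_eq.1 fun n => isPeriodicPt_iff_minimalPeriod_dvd.symm.trans (h n)

namespace Equiv.Perm

variable {α β : Type*}

theorem isCycleOn_setOf_sameCycle (f : Perm α) (x : α) : f.IsCycleOn {y | f.SameCycle x y} :=
  ⟨⟨fun _ hy => sameCycle_apply_right.2 hy, f.injective.injOn,
    fun y hy => ⟨f⁻¹ y, sameCycle_symm_apply_right.2 hy, by simp⟩⟩,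
    fun _ hy _ hz => hy.symm.trans hz⟩

theorem ncard_setOf_sameCycle [Finite α] (f : Perm α) (x : α) :
    {y | f.SameCycle x y}.ncard = minimalPeriod f x := by
  have hfin := toFinite {y | f.SameCycle x y}
  have hcyc : f.IsCycleOn (hfin.toFinset : Set α) := by
    rw [hfin.coe_toFinset]; exact f.isCycleOn_setOf_sameCycle x
  rw [ncard_eq_toFinset_card _ hfin]
  refine Nat.dvd_right_iff_eq.1 fun n => ?_
  rw [← hcyc.pow_apply_eq (hfin.mem_toFinset.2 (SameCycle.refl f x)), coe_pow,
    ← isPeriodicPt_iff_minimalPeriod_dvd]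
  rfl

theorem IsCycleOn.exists_semiconj_addRight_zmod {f : Perm α} {s : Set α} (hf : f.IsCycleOn s)
    (hs : s.Finite) {x : α} (hx : x ∈ s) {a : ℕ} (ha : s.ncard = a) :
    ∃ g : ZMod a → α, Injective g ∧ range g = s ∧ Semiconj g (Equiv.addRight 1) f := by
  have : NeZero a := ⟨ha ▸ ((ncard_pos hs).2 ⟨x, hx⟩).ne'⟩
  have hft : f.IsCycleOn (hs.toFinset : Set α) := by rwa [hs.coe_toFinset]
  have hcard : hs.toFinset.card = a := by rw [← ncard_eq_toFinset_card _ hs, ha]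
  have key : ∀ m n : ℕ, (f ^ m) x = (f ^ n) x ↔ (m : ZMod a) = n := fun m n => by
    rw [hft.pow_apply_eq_pow_apply (hs.mem_toFinset.2 hx), hcard, ZMod.natCast_eq_natCast_iff]
  refine ⟨fun k => (f ^ k.val) x, fun k l h => by simpa using (key _ _).1 h, ?_, fun k => ?_⟩
  · rw [← hf.range_pow hs hx]
    ext y
    constructor
    · rintro ⟨k, rfl⟩; exact ⟨k.val, rfl⟩
    · rintro ⟨n, rfl⟩; exact ⟨n, (key _ _).2 (by simp)⟩
  · change (f ^ (k + 1).val) x = f ((f ^ k.val) x)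
    rw [← Perm.mul_apply, ← pow_succ', key]
    simp

def orbitsOn (f : Perm α) (S : Set α) : Set (Set α) := {O | ∃ x ∈ S, O = {y | f.SameCycle x y}}

theorem ncard_orbitsOn_sep_mul [Finite α] (f : Perm α) {S : Set α} (hS : MapsTo f S S)
    (s : ℕ) :
    {O ∈ f.orbitsOn S | O.ncard = s}.ncard * s = {x ∈ S | minimalPeriod f x = s}.ncard := by
  have hmem : ∀ x ∈ S, ∀ y, f.SameCycle x y → y ∈ S := fun x hx y hxy => by
    obtain ⟨n, -, rfl⟩ := hxy.exists_nat_pow_eq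
    rw [coe_pow]
    exact hS.iterate n hx
  have horbit : ∀ x y, f.SameCycle x y → {z | f.SameCycle x z} = {z | f.SameCycle y z} :=
    fun x y hxy => Set.ext fun z => ⟨hxy.symm.trans, hxy.trans⟩
  rw [← ncard_sUnion_of_forall_ncard_eq ?_ fun O hO => hO.2]
  · congr 1
    ext x
    constructor
    · rintro ⟨_, ⟨⟨y, hy, rfl⟩, hs⟩, hyx⟩
      refine ⟨hmem y hy x hyx, ?_⟩
      rwa [← ncard_setOf_sameCycle, ← horbit y x hyx]
    · rintro ⟨hx, rfl⟩
      exact ⟨{y | f.SameCycle x y}, ⟨⟨x, hx, rfl⟩, ncard_setOf_sameCycle f x⟩, SameCycle.refl f x⟩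
  · rintro _ ⟨⟨x, -, rfl⟩, -⟩ _ ⟨⟨y, -, rfl⟩, -⟩ hne
    exact disjoint_left.2 fun z hxz hyz => hne ((horbit x z hxz).trans (horbit y z hyz).symm)

theorem exists_ncard_eq_minimalPeriod_of_mem_orbitsOn_range [Finite α] {f : Perm α} {g : β → β}
    {F : β → α} (hF : Injective F) (h : Semiconj F g f) {O : Set α}
    (hO : O ∈ f.orbitsOn (range F)) : ∃ y, O.ncard = minimalPeriod g y := by
  obtain ⟨_, ⟨y, rfl⟩, rfl⟩ := hO
  exact ⟨y, by rw [ncard_setOf_sameCycle, h.minimalPeriod_apply hF]⟩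

theorem ncard_orbitsOn_range_sep_mul [Finite α] {f : Perm α} {g : β → β} {F : β → α}
    (hF : Injective F) (h : Semiconj F g f) (s : ℕ) :
    {O ∈ f.orbitsOn (range F) | O.ncard = s}.ncard * s = {y | minimalPeriod g y = s}.ncard := by
  rw [ncard_orbitsOn_sep_mul f (by rintro _ ⟨y, rfl⟩; exact ⟨g y, h y⟩),
    ← ncard_image_of_injective _ hF]
  congr 1
  ext x
  constructor
  · rintro ⟨⟨y, rfl⟩, hy⟩
    exact ⟨y, (h.minimalPeriod_apply hF y).symm.trans hy, rfl⟩
  · rintro ⟨y, hy, rfl⟩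
    exact ⟨⟨y, rfl⟩, (h.minimalPeriod_apply hF y).trans hy⟩

def twistedSwap (σ : Perm α) : Perm (α × α) := (prodComm α α).trans (prodCongr σ σ)

@[simp]
theorem twistedSwap_apply (σ : Perm α) (p : α × α) : twistedSwap σ p = (σ p.2, σ p.1) := rfl

theorem twistedSwap_pow_apply (σ : Perm α) (n : ℕ) (p : α × α) :
    (twistedSwap σ ^ n) p =
      if Even n then ((σ ^ n) p.1, (σ ^ n) p.2) else ((σ ^ n) p.2, (σ ^ n) p.1) := by
  induction n with
  | zero => simp
  | succ n ih =>
    rw [pow_succ', Perm.mul_apply, ih]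
    by_cases hn : Even n <;> simp [hn, pow_succ', Nat.even_add_one]

theorem semiconj_prodMap_twistedSwap {F : β → α} {g : Perm β} {f : Perm α}
    (h : Semiconj F g f) : Semiconj (Prod.map F F) (twistedSwap g) (twistedSwap f) :=
  fun p => by simp [h _]

end Equiv.Perm

open Equiv.Perm

theorem Equiv.addRight_one_pow_apply {R : Type*} [AddGroupWithOne R] (n : ℕ) (x : R) :
    (Equiv.addRight (1 : R) ^ n) x = x + n := by
  induction n with
  | zero => simp
  | succ n ih => simp only [pow_succ', Perm.mul_apply, ih, coe_addRight, Nat.cast_succ, add_assoc]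

theorem ZMod.natCast_eq_of_odd_of_dvd {a b n : ℕ} (hab : a = 2 * b) (hn : Odd n) (hbn : b ∣ n) :
    Odd b ∧ (n : ZMod a) = b := by
  obtain ⟨k, rfl⟩ := hbn
  obtain ⟨hb, m, rfl⟩ := Nat.odd_mul.1 hn
  refine ⟨hb, ?_⟩
  rw [show b * (2 * m + 1) = a * m + b by rw [hab]; ring, Nat.cast_add, Nat.cast_mul,
    ZMod.natCast_self, zero_mul, zero_add]

section TwistedTranslation

variable {a : ℕ}

theorem isPeriodicPt_twistedSwap_addRight_one_iff (p : ZMod a × ZMod a) (n : ℕ) :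
    IsPeriodicPt (twistedSwap (Equiv.addRight 1)) n p ↔
      if Even n then (n : ZMod a) = 0 else (n : ZMod a) = p.1 - p.2 ∧ a ∣ 2 * n := by
  rw [IsPeriodicPt, IsFixedPt, ← coe_pow, twistedSwap_pow_apply, ← ZMod.natCast_eq_zero_iff]
  simp only [Equiv.addRight_one_pow_apply, Prod.ext_iff, Nat.cast_mul, Nat.cast_ofNat]
  split_ifs
  · simp
  · constructor
    · rintro ⟨h1, h2⟩
      exact ⟨eq_sub_of_add_eq' h1, by linear_combination h1 + h2⟩
    · rintro ⟨h1, h2⟩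
      exact ⟨by linear_combination h1, by linear_combination h2 - h1⟩

theorem minimalPeriod_twistedSwap_addRight_one_of_odd (ha : Odd a) (p : ZMod a × ZMod a) :
    minimalPeriod (twistedSwap (Equiv.addRight 1)) p = if p.1 - p.2 = 0 then a else 2 * a := by
  have hcop : Nat.Coprime 2 a := Nat.coprime_two_left.2 ha
  refine minimalPeriod_eq_of_isPeriodicPt_iff fun n => ?_
  rw [isPeriodicPt_twistedSwap_addRight_one_iff, ZMod.natCast_eq_zero_iff]
  rcases Nat.even_or_odd n with hn | hn
  · simp only [hn, if_true]
    split_ifs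
    · rfl
    · exact ⟨hcop.mul_dvd_of_dvd_of_dvd hn.two_dvd, dvd_of_mul_left_dvd⟩
  · simp only [Nat.not_even_iff_odd.2 hn, if_false]
    split_ifs with hd
    · rw [hd, ZMod.natCast_eq_zero_iff]
      exact ⟨fun h => h.1, fun h => ⟨h, dvd_mul_of_dvd_right h 2⟩⟩
    · refine iff_of_false (fun ⟨h1, h2⟩ => hd ?_) fun h => ?_
      · rw [← h1, ZMod.natCast_eq_zero_iff]
        exact hcop.symm.dvd_of_dvd_mul_left h2
      · exact Nat.not_even_iff_odd.2 hn (even_iff_two_dvd.2 (dvd_of_mul_right_dvd h))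

theorem minimalPeriod_twistedSwap_addRight_one_of_even {b : ℕ} (hab : a = 2 * b)
    (p : ZMod a × ZMod a) :
    minimalPeriod (twistedSwap (Equiv.addRight 1)) p =
      if Odd b ∧ p.1 - p.2 = b then b else a := by
  have hdvd : ∀ n, a ∣ 2 * n ↔ b ∣ n := fun n => hab ▸ Nat.mul_dvd_mul_iff_left two_pos
  refine minimalPeriod_eq_of_isPeriodicPt_iff fun n => ?_
  rw [isPeriodicPt_twistedSwap_addRight_one_iff, ZMod.natCast_eq_zero_iff, hdvd]
  rcases Nat.even_or_odd n with hn | hn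
  · simp only [hn, if_true]
    split_ifs with h
    · exact ⟨dvd_of_mul_left_dvd ∘ (hab ▸ ·),
        fun hbn => hab ▸ (Nat.coprime_two_left.2 h.1).mul_dvd_of_dvd_of_dvd hn.two_dvd hbn⟩
    · rfl
  · simp only [Nat.not_even_iff_odd.2 hn, if_false]
    split_ifs with h
    · exact ⟨fun h' => h'.2,
        fun hbn => ⟨(ZMod.natCast_eq_of_odd_of_dvd hab hn hbn).2.trans h.2.symm, hbn⟩⟩
    · refine iff_of_false (fun ⟨h1, hbn⟩ => h ?_) fun han => ?_
      · obtain ⟨hb, hnb⟩ := ZMod.natCast_eq_of_odd_of_dvd hab hn hbn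
        exact ⟨hb, h1 ▸ hnb⟩
      · exact Nat.not_even_iff_odd.2 hn
          (even_iff_two_dvd.2 (dvd_of_mul_right_dvd (hab ▸ han : 2 * b ∣ n)))

end TwistedTranslation

theorem ZMod.ncard_setOf_sub {a : ℕ} (P : ZMod a → Prop) :
    {p : ZMod a × ZMod a | P (p.1 - p.2)}.ncard = a * {d | P d}.ncard := by
  have himage : {p : ZMod a × ZMod a | P (p.1 - p.2)} =
      (fun q : ZMod a × ZMod a => (q.2 + q.1, q.1)) '' (univ ×ˢ {d | P d}) := by
    ext ⟨i, j⟩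
    simp only [mem_ofPred_eq, mem_image, mem_prod, mem_univ, true_and, Prod.exists, Prod.mk.injEq]
    constructor
    · intro h
      exact ⟨j, i - j, h, sub_add_cancel i j, rfl⟩
    · rintro ⟨j, d, hd, rfl, rfl⟩
      simpa using hd
  have hinj : Injective fun q : ZMod a × ZMod a => (q.2 + q.1, q.1) := by
    rintro ⟨j, d⟩ ⟨j', d'⟩ h
    simp only [Prod.mk.injEq] at h
    obtain ⟨h1, rfl⟩ := h
    simpa using h1
  rw [himage, ncard_image_of_injective _ hinj, ncard_prod, ncard_univ, Nat.card_zmod]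

theorem ZMod.ncard_setOf_ite_sub_eq {a u v : ℕ} [NeZero a] (d : ZMod a) (huv : u ≠ v) :
    {p : ZMod a × ZMod a | (if p.1 - p.2 = d then u else v) = u}.ncard = a ∧
      {p : ZMod a × ZMod a | (if p.1 - p.2 = d then u else v) = v}.ncard = a * (a - 1) := by
  rw [ZMod.ncard_setOf_sub fun x => (if x = d then u else v) = u,
    ZMod.ncard_setOf_sub fun x => (if x = d then u else v) = v]
  have hu : {x | (if x = d then u else v) = u} = {d} := by
    ext x; by_cases hx : x = d <;> simp [hx, huv.symm]
  have hv : {x | (if x = d then u else v) = v} = {d}ᶜ := by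
    ext x; by_cases hx : x = d <;> simp [hx, huv]
  rw [hu, hv, ncard_compl, ncard_singleton, Nat.card_zmod, mul_one]
  exact ⟨rfl, rfl⟩

section CycleOrbits

variable {X : Type*} [Finite X] {α : Equiv.Perm X} {a : ℕ} [NeZero a] {g : ZMod a → X}

theorem ncard_orbitsOn_twistedSwap_of_odd (hg_inj : Injective g)
    (hg : Semiconj g (Equiv.addRight 1) α) (ha : Odd a) :
    {O ∈ (twistedSwap α).orbitsOn (range (Prod.map g g)) | O.ncard = a}.ncard = 1 ∧
      {O ∈ (twistedSwap α).orbitsOn (range (Prod.map g g)) | O.ncard = 2 * a}.ncard =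
        (a - 1) / 2 ∧
      ∀ O ∈ (twistedSwap α).orbitsOn (range (Prod.map g g)), O.ncard = a ∨ O.ncard = 2 * a := by
  have hF := semiconj_prodMap_twistedSwap hg
  have hcount := ncard_orbitsOn_range_sep_mul (hg_inj.prodMap hg_inj) hF
  simp_rw [minimalPeriod_twistedSwap_addRight_one_of_odd ha] at hcount
  obtain ⟨h1, h2⟩ := ZMod.ncard_setOf_ite_sub_eq (0 : ZMod a) (u := a) (v := 2 * a)
    (by have := NeZero.pos a; omega)
  refine ⟨?_, ?_, fun O hO => ?_⟩
  · exact Nat.eq_of_mul_eq_mul_right (NeZero.pos a) (by rw [hcount, h1, one_mul])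
  · refine (Nat.div_eq_of_eq_mul_left two_pos (Nat.eq_of_mul_eq_mul_left (NeZero.pos a) ?_)).symm
    rw [← h2, ← hcount]
    ring
  · obtain ⟨p, hp⟩ :=
      exists_ncard_eq_minimalPeriod_of_mem_orbitsOn_range (hg_inj.prodMap hg_inj) hF hO
    rw [hp, minimalPeriod_twistedSwap_addRight_one_of_odd ha]
    split_ifs <;> simp

theorem ncard_orbitsOn_twistedSwap_of_even_half_even {b : ℕ} (hg_inj : Injective g)
    (hg : Semiconj g (Equiv.addRight 1) α) (hab : a = 2 * b) (hb : Even b) :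
    ((twistedSwap α).orbitsOn (range (Prod.map g g))).ncard = a ∧
      ∀ O ∈ (twistedSwap α).orbitsOn (range (Prod.map g g)), O.ncard = a := by
  have hF := semiconj_prodMap_twistedSwap hg
  have hall : ∀ O ∈ (twistedSwap α).orbitsOn (range (Prod.map g g)), O.ncard = a := by
    intro O hO
    obtain ⟨p, hp⟩ :=
      exists_ncard_eq_minimalPeriod_of_mem_orbitsOn_range (hg_inj.prodMap hg_inj) hF hO
    simp [hp, minimalPeriod_twistedSwap_addRight_one_of_even hab, Nat.not_odd_iff_even.2 hb]
  have hcount := ncard_orbitsOn_range_sep_mul (hg_inj.prodMap hg_inj) hF a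
  simp only [minimalPeriod_twistedSwap_addRight_one_of_even hab, Nat.not_odd_iff_even.2 hb,
    false_and, if_false, ofPred_true, ncard_univ, Nat.card_prod, Nat.card_zmod,
    sep_eq_self_iff_mem_true.2 hall] at hcount
  exact ⟨Nat.eq_of_mul_eq_mul_right (NeZero.pos a) hcount, hall⟩

theorem ncard_orbitsOn_twistedSwap_of_even_half_odd {b : ℕ} (hg_inj : Injective g)
    (hg : Semiconj g (Equiv.addRight 1) α) (hab : a = 2 * b) (hb : Odd b) :
    {O ∈ (twistedSwap α).orbitsOn (range (Prod.map g g)) | O.ncard = b}.ncard = 2 ∧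
      {O ∈ (twistedSwap α).orbitsOn (range (Prod.map g g)) | O.ncard = a}.ncard = a - 1 ∧
      ∀ O ∈ (twistedSwap α).orbitsOn (range (Prod.map g g)), O.ncard = b ∨ O.ncard = a := by
  have hF := semiconj_prodMap_twistedSwap hg
  have hcount := ncard_orbitsOn_range_sep_mul (hg_inj.prodMap hg_inj) hF
  simp only [minimalPeriod_twistedSwap_addRight_one_of_even hab, hb, true_and] at hcount
  obtain ⟨h1, h2⟩ := ZMod.ncard_setOf_ite_sub_eq (b : ZMod a) (u := b) (v := a)
    (by have := hb.pos; omega)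
  refine ⟨?_, ?_, fun O hO => ?_⟩
  · exact Nat.eq_of_mul_eq_mul_right (m := b) hb.pos (by rw [hcount, h1, hab, mul_comm])
  · exact Nat.eq_of_mul_eq_mul_left (NeZero.pos a) (by rw [mul_comm, hcount, h2])
  · obtain ⟨p, hp⟩ :=
      exists_ncard_eq_minimalPeriod_of_mem_orbitsOn_range (hg_inj.prodMap hg_inj) hF hO
    rw [hp, minimalPeriod_twistedSwap_addRight_one_of_even hab]
    split_ifs <;> simp

end CycleOrbits

theorem stmt13_general {X : Type*} [Fintype X] (α : Equiv.Perm X) (a : ℕ)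
    (xa : X) (Sa : Set X) (hSa : Sa = {y | α.SameCycle xa y}) (hca : Sa.ncard = a) :
    ∀ τ : Equiv.Perm (X × X), τ = (Equiv.prodComm X X).trans (Equiv.prodCongr α α) →
    ∀ 𝒪 : Set (Set (X × X)),
      𝒪 = {O | ∃ p ∈ Sa ×ˢ Sa, O = {q | τ.SameCycle p q}} →
    (a % 2 = 1 →
      Set.ncard {O ∈ 𝒪 | O.ncard = a} = 1 ∧
      Set.ncard {O ∈ 𝒪 | O.ncard = 2 * a} = (a - 1) / 2 ∧
      ∀ O ∈ 𝒪, O.ncard = a ∨ O.ncard = 2 * a) ∧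
    (a % 4 = 0 → Set.ncard 𝒪 = a ∧ ∀ O ∈ 𝒪, O.ncard = a) ∧
    (a % 4 = 2 →
      Set.ncard {O ∈ 𝒪 | O.ncard = a / 2} = 2 ∧
      Set.ncard {O ∈ 𝒪 | O.ncard = a} = a - 1 ∧
      ∀ O ∈ 𝒪, O.ncard = a / 2 ∨ O.ncard = a) := by
  intro τ hτ 𝒪 h𝒪
  replace hτ : τ = twistedSwap α := hτ
  subst hτ hSa
  have hxa : xa ∈ {y | α.SameCycle xa y} := SameCycle.refl α xa
  have : NeZero a := ⟨hca ▸ ((ncard_pos (toFinite _)).2 ⟨xa, hxa⟩).ne'⟩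
  obtain ⟨g, hg_inj, hg_range, hg⟩ :=
    (α.isCycleOn_setOf_sameCycle xa).exists_semiconj_addRight_zmod (toFinite _) hxa hca
  replace h𝒪 : 𝒪 = (twistedSwap α).orbitsOn (range (Prod.map g g)) := by
    rw [h𝒪, range_prodMap, hg_range]
    rfl
  subst h𝒪
  refine ⟨fun h => ?_, fun h => ?_, fun h => ?_⟩
  · exact ncard_orbitsOn_twistedSwap_of_odd hg_inj hg (Nat.odd_iff.2 h)
  · exact ncard_orbitsOn_twistedSwap_of_even_half_even hg_inj hg (b := a / 2) (by omega)
      (Nat.even_iff.2 (by omega))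
  · exact ncard_orbitsOn_twistedSwap_of_even_half_odd hg_inj hg (by omega)
      (Nat.odd_iff.2 (by omega))

/-- Under the twisted action τ(x,y) = (α(y), α(x)), the a² pairs with both coordinates in
the support of a cycle of α of length a decompose into orbits with cycle-structure
monomial x_a·x_{2a}^{(a−1)/2} if a is odd, x_a^a if a ≡ 0 mod 4, and
x_{a/2}²·x_a^{a−1} if a ≡ 2 mod 4. -/
theorem stmt13 {X : Type*} [Fintype X] (α : Equiv.Perm X) (a : ℕ) (ha : 1 ≤ a)
    (xa : X) (Sa : Set X) (hSa : Sa = {y | α.SameCycle xa y}) (hca : Sa.ncard = a) :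
    ∀ τ : Equiv.Perm (X × X), τ = (Equiv.prodComm X X).trans (Equiv.prodCongr α α) →
    ∀ 𝒪 : Set (Set (X × X)),
      𝒪 = {O | ∃ p ∈ Sa ×ˢ Sa, O = {q | τ.SameCycle p q}} →
    (a % 2 = 1 →
      Set.ncard {O ∈ 𝒪 | O.ncard = a} = 1 ∧
      Set.ncard {O ∈ 𝒪 | O.ncard = 2 * a} = (a - 1) / 2 ∧
      ∀ O ∈ 𝒪, O.ncard = a ∨ O.ncard = 2 * a) ∧
    (a % 4 = 0 → Set.ncard 𝒪 = a ∧ ∀ O ∈ 𝒪, O.ncard = a) ∧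
    (a % 4 = 2 →
      Set.ncard {O ∈ 𝒪 | O.ncard = a / 2} = 2 ∧
      Set.ncard {O ∈ 𝒪 | O.ncard = a} = a - 1 ∧
      ∀ O ∈ 𝒪, O.ncard = a / 2 ∨ O.ncard = a) :=
  stmt13_general α a xa Sa hSa hca
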